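/- arXiv:2009.12937 — 2 statements merged into one kernel-verified Lean document; each statement's English description precedes it below -/
import Mathlib

section
/- Let d ≥ 1 and let P be the d×d matrix with P_{i,i+1} = 1/2 for 1 ≤ i ≤ d−1, P_{i,i−1} = 1/2 for 2 ≤ i ≤ d, and all other entries 0, and set R = I − Pᵀ. Let b_i = (R⁻¹)_{i1} for 1 ≤ i ≤ d. Then: (i) b_i = 2(1 − i/(d+1)) > 0 for every i; (ii) the row sums of R⁻¹ are ∑_{j=1}^d (R⁻¹)_{ij} = i(d + 1 − i) for every 1 ≤ i ≤ d; and (iii) max_{1 ≤ i ≤ d} (1/b_i) ∑_{j=1}^d (R⁻¹)_{ij} √2 = d(d+1)/√2. -/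
/-!
`R = I - P` is half the Dirichlet Laplacian of the path with vertices `0, …, d+1`, so `R⁻¹` is its
Green function `2 min(i,j) (d + 1 - max(i,j)) / (d + 1)` (paper's 1-based indices): each column
vanishes at the two boundary vertices and its second difference is the Kronecker delta. The row
sums `R⁻¹ 1` form the solution of `R w = 1`, the parabola `w_i = i (d + 1 - i)`. Hence
`w_i / b_i = i (d + 1) / 2`, which is largest at `i = d`.
-/

open Matrix Finset

noncomputable section

def atlasR (d : ℕ) : Matrix (Fin d) (Fin d) ℝ :=
  of fun i j => if i = j then 1 else if (j : ℕ) = i + 1 ∨ (i : ℕ) = j + 1 then -1 / 2 else 0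

/-- Indices are 0-based, and extended to `ℤ` so that the boundary vertices are `-1` and `d`. -/
def atlasGreen (d : ℕ) (a b : ℤ) : ℝ :=
  2 * (min a b + 1 : ℤ) * (d - max a b : ℤ) / (d + 1)

end

lemma sum_fin_ite_val_eq_succ {d : ℕ} (f : ℤ → ℝ) (hf : f d = 0) (i : Fin d) :
    ∑ k : Fin d, (if (k : ℕ) = i + 1 then f k else 0) = f (i + 1) := by
  rw [Fin.sum_univ_eq_sum_range (fun k => if k = (i : ℕ) + 1 then f k else 0), sum_ite_eq']
  split_ifs with h
  · push_cast; rfl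
  · rw [show (i : ℤ) + 1 = d by simp at h; omega, hf]

lemma sum_fin_ite_succ_eq_val {d : ℕ} (f : ℤ → ℝ) (hf : f (-1) = 0) (i : Fin d) :
    ∑ k : Fin d, (if (i : ℕ) = k + 1 then f k else 0) = f (i - 1) := by
  rw [Fin.sum_univ_eq_sum_range (fun k => if (i : ℕ) = k + 1 then f k else 0)]
  obtain ⟨i, hi⟩ := i
  cases i with
  | zero => simp [hf]
  | succ m =>
    simp only [add_left_inj, sum_ite_eq, mem_range]
    rw [if_pos (by omega)]
    push_cast; ring_nf

lemma atlasR_mulVec {d : ℕ} (f : ℤ → ℝ) (h₀ : f (-1) = 0) (h₁ : f d = 0) (i : Fin d) :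
    (atlasR d *ᵥ fun k => f k) i = f i - (f (i - 1) + f (i + 1)) / 2 := by
  have hsplit : ∀ k : Fin d, atlasR d i k * f k =
      (if k = i then f k else 0) - (if (k : ℕ) = i + 1 then f k else 0) / 2
        - (if (i : ℕ) = k + 1 then f k else 0) / 2 := by
    intro k
    simp only [atlasR, of_apply, Fin.ext_iff]
    split_ifs <;> first | omega | ring
  simp only [mulVec, dotProduct, hsplit, sum_sub_distrib, ← sum_div, sum_ite_eq', mem_univ,
    if_true, sum_fin_ite_val_eq_succ f h₁, sum_fin_ite_succ_eq_val f h₀]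
  ring

lemma atlasGreen_neg_one_left (d : ℕ) {b : ℤ} (hb : 0 ≤ b) : atlasGreen d (-1) b = 0 := by
  simp [atlasGreen, min_eq_left (show (-1 : ℤ) ≤ b by omega)]

lemma atlasGreen_natCast_left (d : ℕ) {b : ℤ} (hb : b ≤ d) : atlasGreen d d b = 0 := by
  simp [atlasGreen, max_eq_left hb]

lemma atlasGreen_second_difference (d : ℕ) {i j : ℤ} (hi : 0 ≤ i) (hj : j < d) :
    atlasGreen d i j - (atlasGreen d (i - 1) j + atlasGreen d (i + 1) j) / 2
      = if i = j then 1 else 0 := by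
  have : (d : ℝ) + 1 ≠ 0 := by positivity
  simp only [atlasGreen, min_def, max_def]
  split_ifs <;> first
    | omega
    | (push_cast; field_simp; ring1)
    | (obtain rfl : i = j := by omega
       push_cast; field_simp; ring1)
    | (obtain rfl : i = j + 1 := by omega
       push_cast; field_simp; ring1)

lemma atlasR_mul_of_atlasGreen (d : ℕ) :
    atlasR d * of (fun i j : Fin d => atlasGreen d i j) = 1 := by
  ext i j
  have h := atlasR_mulVec (fun a => atlasGreen d a j) (atlasGreen_neg_one_left d (by positivity))
    (atlasGreen_natCast_left d (by exact_mod_cast j.isLt.le)) i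
  rw [atlasGreen_second_difference d (by positivity) (by exact_mod_cast j.isLt)] at h
  simpa [mul_apply, mulVec, dotProduct, one_apply, Fin.ext_iff] using h

lemma inv_atlasR (d : ℕ) : (atlasR d)⁻¹ = of fun i j : Fin d => atlasGreen d i j :=
  inv_eq_right_inv (atlasR_mul_of_atlasGreen d)

lemma atlasR_mulVec_parabola (d : ℕ) :
    atlasR d *ᵥ (fun i : Fin d => ((i : ℝ) + 1) * (d - i)) = 1 := by
  ext i
  have h := atlasR_mulVec (fun a : ℤ => ((a : ℝ) + 1) * (d - a)) (by norm_num) (by norm_num) i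
  push_cast at h
  rw [h]
  simp only [Pi.one_apply]
  ring

lemma sum_inv_atlasR_apply (d : ℕ) (i : Fin d) :
    ∑ j, (atlasR d)⁻¹ i j = ((i : ℝ) + 1) * (d - i) := by
  have hdet : IsUnit (atlasR d).det := isUnit_det_of_right_inverse (atlasR_mul_of_atlasGreen d)
  have h := congrFun (congrArg ((atlasR d)⁻¹ *ᵥ ·) (atlasR_mulVec_parabola d)) i
  rw [mulVec_mulVec, nonsing_inv_mul _ hdet, one_mulVec] at h
  simpa [mulVec, dotProduct] using h.symm

lemma inv_atlasR_apply_zero {d : ℕ} (hd : 0 < d) (i : Fin d) :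
    (atlasR d)⁻¹ i ⟨0, hd⟩ = 2 * (d - i) / (d + 1) := by
  simp [inv_atlasR, atlasGreen]

lemma eq_atlasR {d : ℕ} {P R : Matrix (Fin d) (Fin d) ℝ}
    (hP : ∀ i j : Fin d, P i j =
      if (j : ℕ) = (i : ℕ) + 1 then 1/2 else if (i : ℕ) = (j : ℕ) + 1 then 1/2 else 0)
    (hR : R = 1 - Pᵀ) : R = atlasR d := by
  ext i j
  simp only [hR, Matrix.sub_apply, one_apply, transpose_apply, hP, atlasR, of_apply, Fin.ext_iff]
  split_ifs <;> first | omega | norm_num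

lemma inv_atlasR_row_ratio {d : ℕ} (hd : 0 < d) (i : Fin d) :
    1 / (atlasR d)⁻¹ i ⟨0, hd⟩ * ∑ j, (atlasR d)⁻¹ i j * √2 =
      (i + 1) * (d + 1) / √2 := by
  have hi : (i : ℝ) < d := by exact_mod_cast i.isLt
  have hdi : (d : ℝ) - i ≠ 0 := by linarith
  rw [← sum_mul, sum_inv_atlasR_apply, inv_atlasR_apply_zero]
  field_simp
  norm_num

/-- For the symmetric Atlas reflection matrix: the first column of `R⁻¹` is
`b_i = 2(1 - i/(d+1)) > 0`, row sums of `R⁻¹` equal `i(d+1-i)`, and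
`max_i (1/b_i) ∑_j (R⁻¹)_{ij} √2 = d(d+1)/√2`. Indices of `Fin d` are 0-based, so the paper's
1-based index `i` corresponds to `(i : ℕ) + 1`. -/
theorem stmt8 (d : ℕ) (hd : 1 ≤ d)
    (P : Matrix (Fin d) (Fin d) ℝ)
    (hP : ∀ i j : Fin d, P i j =
      if (j : ℕ) = (i : ℕ) + 1 then 1/2 else if (i : ℕ) = (j : ℕ) + 1 then 1/2 else 0)
    (R : Matrix (Fin d) (Fin d) ℝ) (hR : R = 1 - Pᵀ) :
    (∀ i : Fin d,
      R⁻¹ i ⟨0, hd⟩ = 2 * (1 - (((i : ℕ) : ℝ) + 1) / ((d : ℝ) + 1)) ∧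
      0 < R⁻¹ i ⟨0, hd⟩) ∧
    (∀ i : Fin d, ∑ j, R⁻¹ i j = (((i : ℕ) : ℝ) + 1) * ((d : ℝ) - ((i : ℕ) : ℝ))) ∧
    (Finset.univ.sup' ⟨⟨0, hd⟩, Finset.mem_univ _⟩
        (fun i : Fin d => (1 / R⁻¹ i ⟨0, hd⟩) * ∑ j, R⁻¹ i j * Real.sqrt 2)
      = (d : ℝ) * ((d : ℝ) + 1) / Real.sqrt 2) := by
  obtain rfl := eq_atlasR hP hR
  have hi : ∀ i : Fin d, (i : ℝ) + 1 ≤ d := fun i => by exact_mod_cast i.isLt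
  refine ⟨fun i => ⟨?_, ?_⟩, sum_inv_atlasR_apply d, ?_⟩
  · rw [inv_atlasR_apply_zero]
    field_simp
    ring
  · rw [inv_atlasR_apply_zero]
    have := hi i
    exact div_pos (by linarith) (by positivity)
  · refine le_antisymm (sup'_le _ _ fun i _ => ?_)
      (le_trans ?_ (le_sup' _ (mem_univ ⟨d - 1, by omega⟩)))
    · rw [inv_atlasR_row_ratio]
      gcongr
      exact hi i
    · rw [inv_atlasR_row_ratio]
      simp [Nat.cast_sub hd]
end

section
/- Let d ≥ 2 and let P be a d×d real matrix with nonnegative entries, row sums at most 1, and Pⁿ → 0 entrywise as n → ∞; set R = I − Pᵀ. Suppose there are constants C, M ≥ 1 and α ∈ (0, 1) with (R⁻¹)_{ij} ≤ C α^{j−i} for all 1 ≤ i ≤ j ≤ d and (R⁻¹)_{ij} ≤ M for all 1 ≤ i, j ≤ d. Fix α < β < δ < 1, set C̃ = M/((1−δ)(1−β/δ)) + C(α/δ)/((1−α/δ)(1−β/δ)) and C̃' = max{1, C/(1 − α/β) + M β/(1 − β)}. Let x ∈ ℝ^d have nonnegative entries, let u = ∑_{i=1}^d β^i (R⁻¹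 x)_i, and let 1 ≤ d' ≤ d−1 be an integer. If u ≥ 2 C̃' C̃ · (max_{1 ≤ j ≤ d} δ^j x_j) · (β/δ)^{d'+1}, then ∑_{i=1}^{d'} β^i x_i ≥ u/(2 C̃'). -/
/-!
Reading the weighted functional column by column, `u = ∑ⱼ (∑ᵢ βⁱ (R⁻¹)ᵢⱼ) xⱼ`, and the decay
conditions bound each column weight by `C̃' βʲ` (a geometric sum in `α/β` above the diagonal,
one in `β` below it), so `u ≤ C̃' ∑ⱼ βʲ xⱼ`. The coordinates beyond `d'` contribute at most
`‖x‖_{∞,δ} ∑_{j > d'} (β/δ)ʲ ≤ C̃ ‖x‖_{∞,δ} (β/δ)^{d'+1} ≤ u / (2C̃')`, which leaves at least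
`u / (2C̃')` for the first `d'` coordinates.
-/

open Matrix Finset

theorem sum_pow_le_pow_div_one_sub {ι : Type*} {r : ℝ} (hr0 : 0 ≤ r) (hr1 : r < 1)
    {s : Finset ι} {f : ι → ℕ} {a : ℕ} (hf : Set.InjOn f s) (ha : ∀ i ∈ s, a ≤ f i) :
    ∑ i ∈ s, r ^ f i ≤ r ^ a / (1 - r) := by
  have hinj : Set.InjOn (fun i => f i - a) s := fun i hi i' hi' h =>
    hf hi hi' (by have := ha i hi; have := ha i' hi'; simp only at h; omega)
  calc ∑ i ∈ s, r ^ f i = r ^ a * ∑ k ∈ s.image (fun i => f i - a), r ^ k := by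
        rw [sum_image hinj, mul_sum]
        refine sum_congr rfl fun i hi => ?_
        rw [← pow_add, Nat.add_sub_cancel' (ha i hi)]
    _ ≤ r ^ a * (1 - r)⁻¹ := by
        rw [← tsum_geometric_of_lt_one hr0 hr1]
        gcongr
        exact (summable_geometric_of_lt_one hr0 hr1).sum_le_tsum _ fun k _ => pow_nonneg hr0 k
    _ = r ^ a / (1 - r) := (div_eq_mul_inv _ _).symm

theorem dotProduct_mulVec_le_of_vecMul_le {n : Type*} [Fintype n] {A : Matrix n n ℝ}
    {w x : n → ℝ} {K : ℝ} (hx : ∀ j, 0 ≤ x j) (hcol : ∀ j, (w ᵥ* A) j ≤ K * w j) :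
    w ⬝ᵥ (A *ᵥ x) ≤ K * (w ⬝ᵥ x) := by
  rw [dotProduct_mulVec, dotProduct, dotProduct, mul_sum]
  exact sum_le_sum fun j _ =>
    (mul_le_mul_of_nonneg_right (hcol j) (hx j)).trans_eq (mul_assoc _ _ _)

section Weighted

variable {d : ℕ} {β : ℝ}

theorem sum_pow_mul_le_of_decay {A : Matrix (Fin d) (Fin d) ℝ} {C M α : ℝ}
    (hC : 0 ≤ C) (hM : 0 ≤ M) (hα : 0 ≤ α) (hαβ : α < β) (hβ1 : β < 1)
    (hgeo : ∀ i j : Fin d, (i : ℕ) ≤ (j : ℕ) → A i j ≤ C * α ^ ((j : ℕ) - (i : ℕ)))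
    (hbdd : ∀ i j, A i j ≤ M) (j : Fin d) :
    ∑ i : Fin d, β ^ ((i : ℕ) + 1) * A i j
      ≤ (C / (1 - α / β) + M * β / (1 - β)) * β ^ ((j : ℕ) + 1) := by
  have hβ : 0 < β := hα.trans_lt hαβ
  have hq0 : 0 ≤ α / β := div_nonneg hα hβ.le
  have hq1 : α / β < 1 := (div_lt_one hβ).mpr hαβ
  rw [← sum_filter_add_sum_filter_not univ (fun i : Fin d => (i : ℕ) ≤ j)]
  have hhead : ∑ i ∈ univ.filter (fun i : Fin d => (i : ℕ) ≤ j), β ^ ((i : ℕ) + 1) * A i j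
      ≤ C * β ^ ((j : ℕ) + 1) * (1 / (1 - α / β)) := by
    calc _ ≤ ∑ i ∈ univ.filter (fun i : Fin d => (i : ℕ) ≤ j),
            C * β ^ ((j : ℕ) + 1) * (α / β) ^ ((j : ℕ) - (i : ℕ)) := by
          refine sum_le_sum fun i hi => ?_
          have hij := (mem_filter.mp hi).2
          have hexp : C * β ^ ((j : ℕ) + 1) * (α / β) ^ ((j : ℕ) - i)
              = β ^ ((i : ℕ) + 1) * (C * α ^ ((j : ℕ) - i)) := by
            rw [show (j : ℕ) + 1 = ((j : ℕ) - i) + ((i : ℕ) + 1) by omega, pow_add, div_pow]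
            field_simp
          rw [hexp]
          exact mul_le_mul_of_nonneg_left (hgeo i j hij) (by positivity)
      _ ≤ _ := by
          rw [← mul_sum]
          gcongr
          simpa using sum_pow_le_pow_div_one_sub hq0 hq1 (a := 0)
            (fun i hi i' hi' h => Fin.ext (by
              have := (mem_filter.mp hi).2; have := (mem_filter.mp hi').2; omega))
            (fun _ _ => Nat.zero_le _)
  have htail : ∑ i ∈ univ.filter (fun i : Fin d => ¬ (i : ℕ) ≤ j), β ^ ((i : ℕ) + 1) * A i j
      ≤ M * (β ^ ((j : ℕ) + 2) / (1 - β)) := by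
    calc _ ≤ ∑ i ∈ univ.filter (fun i : Fin d => ¬ (i : ℕ) ≤ j), M * β ^ ((i : ℕ) + 1) :=
          sum_le_sum fun i _ => (mul_le_mul_of_nonneg_left (hbdd i j) (by positivity)).trans_eq
            (mul_comm _ _)
      _ ≤ _ := by
          rw [← mul_sum]
          gcongr
          exact sum_pow_le_pow_div_one_sub hβ.le hβ1
            (fun i _ i' _ h => Fin.ext (by omega))
            (fun i hi => by have := (mem_filter.mp hi).2; omega)
  calc _ ≤ C * β ^ ((j : ℕ) + 1) * (1 / (1 - α / β)) + M * (β ^ ((j : ℕ) + 2) / (1 - β)) :=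
        add_le_add hhead htail
    _ = _ := by ring

theorem sum_filter_pow_mul_le_of_weighted_le {x : Fin d → ℝ} {δ N : ℝ} (hβ : 0 ≤ β)
    (hβδ : β < δ) (hN0 : 0 ≤ N) (hN : ∀ i : Fin d, δ ^ ((i : ℕ) + 1) * x i ≤ N) (d' : ℕ) :
    ∑ i ∈ univ.filter (fun i : Fin d => d' ≤ (i : ℕ)), β ^ ((i : ℕ) + 1) * x i
      ≤ N * (β / δ) ^ (d' + 1) / (1 - β / δ) := by
  have hδ : 0 < δ := hβ.trans_lt hβδ
  calc _ ≤ ∑ i ∈ univ.filter (fun i : Fin d => d' ≤ (i : ℕ)), N * (β / δ) ^ ((i : ℕ) + 1) := by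
        refine sum_le_sum fun i _ => ?_
        have hexp : β ^ ((i : ℕ) + 1) * x i
            = (β / δ) ^ ((i : ℕ) + 1) * (δ ^ ((i : ℕ) + 1) * x i) := by
          rw [div_pow]
          field_simp
        rw [hexp, mul_comm N]
        exact mul_le_mul_of_nonneg_left (hN i) (by positivity)
    _ ≤ _ := by
        rw [← mul_sum, mul_div_assoc]
        gcongr
        exact sum_pow_le_pow_div_one_sub (div_nonneg hβ hδ.le) ((div_lt_one hδ).mpr hβδ)
          (fun i _ i' _ h => Fin.ext (by omega))
          (fun i hi => Nat.succ_le_succ (mem_filter.mp hi).2)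

end Weighted

theorem one_div_one_sub_div_le_add_div {C M α β δ : ℝ} (hC : 0 ≤ C) (hM : 1 ≤ M) (hα : 0 ≤ α)
    (hαδ : α < δ) (hβδ : β < δ) (hδ1 : δ < 1) :
    1 / (1 - β / δ)
      ≤ M / ((1 - δ) * (1 - β / δ)) + C * (α / δ) / ((1 - α / δ) * (1 - β / δ)) := by
  have hδ : 0 < δ := hα.trans_lt hαδ
  have hr : 0 < 1 - β / δ := sub_pos.mpr ((div_lt_one hδ).mpr hβδ)
  have hq : 0 < 1 - α / δ := sub_pos.mpr ((div_lt_one hδ).mpr hαδ)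
  calc 1 / (1 - β / δ) ≤ M / ((1 - δ) * (1 - β / δ)) := by
        rw [div_le_div_iff₀ hr (mul_pos (by linarith) hr)]
        nlinarith
    _ ≤ _ := le_add_of_nonneg_right (div_nonneg (by positivity) (mul_nonneg hq.le hr.le))

-- `Fin d` is 0-based: the paper's index `i` is `(i : ℕ) + 1` here.
/-- Key deterministic step of the local contraction lemma: if the weighted functional
`u = ∑ βⁱ (R⁻¹x)_i` exceeds `2C̃'C̃ ‖x‖_{∞,δ} (β/δ)^{d'+1}`, then the first `d'` weighted
coordinates of `x` carry at least a fraction `1/(2C̃')` of `u`. Indices of `Fin d` are 0-based,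
so the paper's 1-based index `i` corresponds to `(i : ℕ) + 1`. -/
theorem stmt11 (d : ℕ) (hd : 2 ≤ d)
    (R : Matrix (Fin d) (Fin d) ℝ)
    (C M α β δ : ℝ) (hC : 1 ≤ C) (hM : 1 ≤ M)
    (hα0 : 0 < α) (hαβ : α < β) (hβδ : β < δ) (hδ1 : δ < 1)
    (hgeo : ∀ i j : Fin d, (i : ℕ) ≤ (j : ℕ) → R⁻¹ i j ≤ C * α ^ ((j : ℕ) - (i : ℕ)))
    (hbdd : ∀ i j, R⁻¹ i j ≤ M)
    (Ctil Ctil' : ℝ)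
    (hCtil : Ctil = M / ((1 - δ) * (1 - β / δ)) + C * (α / δ) / ((1 - α / δ) * (1 - β / δ)))
    (hCtil' : Ctil' = max 1 (C / (1 - α / β) + M * β / (1 - β)))
    (x : Fin d → ℝ) (hx : ∀ i, 0 ≤ x i)
    (u : ℝ) (hu : u = ∑ i : Fin d, β ^ ((i : ℕ) + 1) * (R⁻¹ *ᵥ x) i)
    (d' : ℕ)
    (hbig : 2 * Ctil' * Ctil *
        (univ.sup' ⟨⟨0, by omega⟩, mem_univ _⟩ (fun j : Fin d => δ ^ ((j : ℕ) + 1) * x j)) *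
        (β / δ) ^ (d' + 1) ≤ u) :
    u / (2 * Ctil') ≤ ∑ i ∈ univ.filter (fun i : Fin d => (i : ℕ) < d'),
      β ^ ((i : ℕ) + 1) * x i := by
  have hβ : 0 < β := hα0.trans hαβ
  have hδ : 0 < δ := hβ.trans hβδ
  set N := univ.sup' ⟨⟨0, by omega⟩, mem_univ _⟩ (fun j : Fin d => δ ^ ((j : ℕ) + 1) * x j)
  have hN : ∀ i : Fin d, δ ^ ((i : ℕ) + 1) * x i ≤ N := fun i =>
    le_sup' (fun j : Fin d => δ ^ ((j : ℕ) + 1) * x j) (mem_univ i)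
  have hN0 : 0 ≤ N := (mul_nonneg (by positivity) (hx _)).trans (hN ⟨0, by omega⟩)
  have hCtil'_pos : 0 < Ctil' := hCtil' ▸ one_pos.trans_le (le_max_left _ _)
  have hu_le : u ≤ Ctil' * ∑ i : Fin d, β ^ ((i : ℕ) + 1) * x i :=
    hu ▸ dotProduct_mulVec_le_of_vecMul_le hx fun j =>
      (sum_pow_mul_le_of_decay (by linarith) (by linarith) hα0.le hαβ (hβδ.trans hδ1)
        hgeo hbdd j).trans
        (mul_le_mul_of_nonneg_right (hCtil' ▸ le_max_right _ _) (by positivity))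
  have hCtil_ge : 1 / (1 - β / δ) ≤ Ctil :=
    hCtil ▸ one_div_one_sub_div_le_add_div (by linarith) hM hα0.le (hαβ.trans hβδ) hβδ hδ1
  have htail : ∑ i ∈ univ.filter (fun i : Fin d => d' ≤ (i : ℕ)), β ^ ((i : ℕ) + 1) * x i
      ≤ N * (β / δ) ^ (d' + 1) * Ctil :=
    calc _ ≤ N * (β / δ) ^ (d' + 1) * (1 / (1 - β / δ)) := by
          rw [mul_one_div]
          exact sum_filter_pow_mul_le_of_weighted_le hβ.le hβδ hN0 hN d'
      _ ≤ _ := by gcongr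
  have hsplit := (sum_filter_add_sum_filter_not univ (fun i : Fin d => (i : ℕ) < d')
    fun i => β ^ ((i : ℕ) + 1) * x i).symm
  simp only [not_lt] at hsplit
  rw [hsplit, mul_add] at hu_le
  rw [div_le_iff₀ (by positivity)]
  nlinarith [mul_le_mul_of_nonneg_left htail hCtil'_pos.le]
end
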